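/- Continuous strong comparison principle: Suppose Ω is in addition connected. Let c₁, c₂ : ℝᵈ → ℝ each be twice continuously differentiable on Ω and continuous on cl(Ω). If L[c₁](x) < L[c₂](x) for all x ∈ Ω and c₁(x) ≤ c₂(x) for all x ∈ ∂Ω, then c₁(x) < c₂(x) for all x ∈ Ω. -/

import Mathlib

/-!
Let `u = c₁ - c₂` and suppose `u x ≥ 0` at some `x ∈ Ω`. Since `closure Ω` is compact and
`u ≤ 0` on `closure Ω \ Ω`, `u` attains a nonnegative maximum over `Ω` at an interior point `x₀`.
There `∇u = 0` and `∇²u` is negative semidefinite, so the product rule reduces the divergence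
term of `L[u](x₀)` to `-∑ D_ij ∂_i∂_j u ≥ 0` (as `D(x₀)` is positive semidefinite), while
`α u ≥ 0`. Hence `L[c₁](x₀) - L[c₂](x₀) = L[u](x₀) ≥ 0`, contradicting `L[c₁] < L[c₂]`.
-/

noncomputable section

/-- Partial derivative in the `i`-th coordinate direction. -/
def pd (d : ℕ) (f : EuclideanSpace ℝ (Fin d) → ℝ) (i : Fin d)
    (x : EuclideanSpace ℝ (Fin d)) : ℝ :=
  fderiv ℝ f x (EuclideanSpace.single i 1)

/-- The elliptic operator in divergence form
`L[c](x) = −div(D(x)·grad c(x)) + v(x)·grad c(x) + α(x) c(x)`. -/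
def Lop (d : ℕ) (D : EuclideanSpace ℝ (Fin d) → Matrix (Fin d) (Fin d) ℝ)
    (v : EuclideanSpace ℝ (Fin d) → EuclideanSpace ℝ (Fin d))
    (α : EuclideanSpace ℝ (Fin d) → ℝ)
    (c : EuclideanSpace ℝ (Fin d) → ℝ) (x : EuclideanSpace ℝ (Fin d)) : ℝ :=
  -(∑ i, pd d (fun y => ∑ j, D y i j * pd d c j y) i x)
    + (∑ i, v x i * pd d c i x) + α x * c x

open Filter Topology

section SecondDerivative

theorem IsLocalMax.deriv_deriv_nonpos {g : ℝ → ℝ} {t₀ : ℝ} (h : IsLocalMax g t₀)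
    (hc : ContinuousAt g t₀) : deriv (deriv g) t₀ ≤ 0 := by
  by_contra! hpos
  -- A strict second-derivative test would make `t₀` also a local minimum, so `g` is locally
  -- constant and its second derivative vanishes.
  have hmin : IsLocalMin g t₀ := isLocalMin_of_deriv_deriv_pos hpos h.deriv_eq_zero hc
  have hconst : g =ᶠ[𝓝 t₀] fun _ => g t₀ := by
    filter_upwards [h, hmin] with t hle hge using le_antisymm hle hge
  have hderiv : deriv g =ᶠ[𝓝 t₀] fun _ => 0 := by
    filter_upwards [hconst.eventuallyEq_nhds] with t ht
    rw [ht.deriv_eq, deriv_const]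
  rw [hderiv.deriv_eq, deriv_const] at hpos
  exact lt_irrefl 0 hpos

variable {E : Type*} [NormedAddCommGroup E] [NormedSpace ℝ E]

theorem IsLocalMax.fderiv_fderiv_apply_self_nonpos {u : E → ℝ} {x₀ : E} (h : IsLocalMax u x₀)
    (hu : ∀ᶠ y in 𝓝 x₀, DifferentiableAt ℝ u y) (hu' : DifferentiableAt ℝ (fderiv ℝ u) x₀)
    (ξ : E) : fderiv ℝ (fderiv ℝ u) x₀ ξ ξ ≤ 0 := by
  set γ : ℝ → E := fun t => x₀ + t • ξ
  have hγ : ∀ t, HasDerivAt γ ξ t := fun t =>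
    (((hasDerivAt_id t).smul_const ξ).const_add x₀).congr_deriv (one_smul ℝ ξ)
  have hγ0 : γ 0 = x₀ := by simp [γ]
  have hγtendsto : Tendsto γ (𝓝 0) (𝓝 x₀) := hγ0 ▸ (hγ 0).continuousAt.tendsto
  have hmax : IsLocalMax (u ∘ γ) 0 := (hγ0 ▸ h).comp_continuous (hγ 0).continuousAt
  have hcont : ContinuousAt (u ∘ γ) 0 :=
    (hγ0 ▸ hu.self_of_nhds.continuousAt).comp (hγ 0).continuousAt
  have hderiv : deriv (u ∘ γ) =ᶠ[𝓝 0] fun t => fderiv ℝ u (γ t) ξ := by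
    filter_upwards [hγtendsto.eventually hu] with t ht
    exact (ht.hasFDerivAt.comp_hasDerivAt t (hγ t)).deriv
  have hderiv2 : HasDerivAt (fun t => fderiv ℝ u (γ t) ξ) (fderiv ℝ (fderiv ℝ u) x₀ ξ ξ) 0 := by
    have := ((hγ0 ▸ hu'.hasFDerivAt).comp_hasDerivAt 0 (hγ 0)).clm_apply (hasDerivAt_const 0 ξ)
    rwa [hγ0, map_zero, add_zero] at this
  simpa [hderiv.deriv_eq, hderiv2.deriv] using hmax.deriv_deriv_nonpos hcont

end SecondDerivative

theorem Matrix.posSemidef_of_isSymm_of_sum_mul_nonneg {n : Type*} [Fintype n]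
    {A : Matrix n n ℝ} (hA : A.IsSymm) (hpos : ∀ ξ : n → ℝ, 0 ≤ ∑ i, ∑ j, ξ i * A i j * ξ j) :
    A.PosSemidef := by
  refine .of_dotProduct_mulVec_nonneg (Matrix.isHermitian_iff_isSelfAdjoint.mpr hA) fun ξ => ?_
  simpa [dotProduct, Matrix.mulVec, Finset.mul_sum, mul_assoc, mul_comm, mul_left_comm]
    using hpos ξ

theorem Matrix.PosSemidef.sum_mul_nonpos {n : Type*} [Fintype n] {A H : Matrix n n ℝ}
    (hA : A.PosSemidef) (hH : ∀ ξ : n → ℝ, ∑ i, ∑ j, ξ i * ξ j * H i j ≤ 0) :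
    ∑ i, ∑ j, A i j * H i j ≤ 0 := by
  classical
  open scoped MatrixOrder in
  obtain ⟨S, hS⟩ := CStarAlgebra.nonneg_iff_eq_star_mul_self.mp hA.nonneg
  -- Writing `A = Sᵀ S` splits the sum into quadratic forms of `H` at the rows of `S`.
  have hA_eq : ∀ i j, A i j = ∑ k, S k i * S k j := fun i j => by
    simp [hS, Matrix.mul_apply, Matrix.star_eq_conjTranspose]
  calc ∑ i, ∑ j, A i j * H i j = ∑ i, ∑ j, ∑ k, S k i * S k j * H i j := by
        simp only [hA_eq, Finset.sum_mul]
    _ = ∑ k, ∑ i, ∑ j, S k i * S k j * H i j :=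
        (Finset.sum_congr rfl fun _ _ => Finset.sum_comm).trans Finset.sum_comm
    _ ≤ 0 := Finset.sum_nonpos fun k _ => hH (S k)

theorem sum_sum_mul_apply_single {ι : Type*} [Fintype ι] [DecidableEq ι]
    (B : EuclideanSpace ℝ ι →L[ℝ] EuclideanSpace ℝ ι →L[ℝ] ℝ) (ξ : ι → ℝ) :
    ∑ i, ∑ j, ξ i * ξ j * B (EuclideanSpace.single i 1) (EuclideanSpace.single j 1)
      = B (WithLp.toLp 2 ξ) (WithLp.toLp 2 ξ) := by
  have hξ : WithLp.toLp 2 ξ = ∑ i, ξ i • EuclideanSpace.single i (1 : ℝ) := by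
    ext j
    simp [Pi.single_apply]
  simp only [hξ, map_sum, map_smul, _root_.sum_apply, _root_.smul_apply, smul_eq_mul,
    Finset.mul_sum]
  rw [Finset.sum_comm]
  exact Finset.sum_congr rfl fun _ _ => Finset.sum_congr rfl fun _ _ => by ring

theorem exists_isMaxOn_nonneg_of_nonpos_on_boundary {X : Type*} [TopologicalSpace X]
    {s : Set X} {u : X → ℝ} (hs : IsCompact (closure s)) (hu : ContinuousOn u (closure s))
    (hbd : ∀ x ∈ closure s \ s, u x ≤ 0) {x : X} (hx : x ∈ s) (hux : 0 ≤ u x) :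
    ∃ x₀ ∈ s, IsMaxOn u s x₀ ∧ 0 ≤ u x₀ := by
  obtain ⟨x₁, hx₁, hmax⟩ := hs.exists_isMaxOn ⟨x, subset_closure hx⟩ hu
  by_cases hx₁s : x₁ ∈ s
  · exact ⟨x₁, hx₁s, hmax.on_subset subset_closure, hux.trans (hmax (subset_closure hx))⟩
  · -- The maximum over `closure s` is then `≤ 0 ≤ u x`, so it is attained at `x` as well.
    refine ⟨x, hx, fun y hy => ?_, hux⟩
    have hy₁ : u y ≤ u x₁ := hmax (subset_closure hy)
    have hx₁₀ : u x₁ ≤ 0 := hbd x₁ ⟨hx₁, hx₁s⟩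
    exact hy₁.trans (hx₁₀.trans hux)

section Euclidean

variable {d : ℕ} {D : EuclideanSpace ℝ (Fin d) → Matrix (Fin d) (Fin d) ℝ}
  {v : EuclideanSpace ℝ (Fin d) → EuclideanSpace ℝ (Fin d)} {α : EuclideanSpace ℝ (Fin d) → ℝ}
  {x : EuclideanSpace ℝ (Fin d)}

theorem pd_pd_eq_fderiv_fderiv {u : EuclideanSpace ℝ (Fin d) → ℝ}
    (hu : DifferentiableAt ℝ (fderiv ℝ u) x) (i j : Fin d) :
    pd d (pd d u j) i x
      = fderiv ℝ (fderiv ℝ u) x (EuclideanSpace.single i 1) (EuclideanSpace.single j 1) := by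
  change fderiv ℝ (fun y => fderiv ℝ u y (EuclideanSpace.single j 1)) x _ = _
  simp [fderiv_clm_apply hu (differentiableAt_const _)]

theorem ContDiffAt.differentiableAt_pd {u : EuclideanSpace ℝ (Fin d) → ℝ}
    (hu : ContDiffAt ℝ 2 u x) (j : Fin d) : DifferentiableAt ℝ (pd d u j) x :=
  ((hu.fderiv_right (m := 1) le_rfl).differentiableAt one_ne_zero).clm_apply
    (differentiableAt_const _)

theorem pd_sub {f g : EuclideanSpace ℝ (Fin d) → ℝ} (hf : DifferentiableAt ℝ f x)
    (hg : DifferentiableAt ℝ g x) (i : Fin d) : pd d (f - g) i x = pd d f i x - pd d g i x := by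
  simp [pd, fderiv_sub hf hg]

theorem differentiableAt_sum_mul_pd (hD : ∀ i j, DifferentiableAt ℝ (fun y => D y i j) x)
    {c : EuclideanSpace ℝ (Fin d) → ℝ} (hc : ContDiffAt ℝ 2 c x) (i : Fin d) :
    DifferentiableAt ℝ (fun y => ∑ j, D y i j * pd d c j y) x :=
  DifferentiableAt.fun_sum fun j _ => (hD i j).mul (hc.differentiableAt_pd j)

theorem pd_sum_mul_pd_of_pd_eq_zero (hD : ∀ i j, DifferentiableAt ℝ (fun y => D y i j) x)
    {u : EuclideanSpace ℝ (Fin d) → ℝ} (hu : ∀ j, DifferentiableAt ℝ (pd d u j) x)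
    (hcrit : ∀ j, pd d u j x = 0) (i : Fin d) :
    pd d (fun y => ∑ j, D y i j * pd d u j y) i x = ∑ j, D x i j * pd d (pd d u j) i x := by
  rw [pd, fderiv_fun_sum (A := fun j y => D y i j * pd d u j y) fun j _ => (hD i j).mul (hu j),
    sum_apply]
  refine Finset.sum_congr rfl fun j _ => ?_
  rw [fderiv_fun_mul (hD i j) (hu j)]
  simp only [smul_apply, hcrit j, zero_smul, add_zero, smul_eq_mul]
  rfl

theorem Lop_sub (hD : ∀ i j, DifferentiableAt ℝ (fun y => D y i j) x)
    {c₁ c₂ : EuclideanSpace ℝ (Fin d) → ℝ} (hc₁ : ContDiffAt ℝ 2 c₁ x)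
    (hc₂ : ContDiffAt ℝ 2 c₂ x) :
    Lop d D v α (c₁ - c₂) x = Lop d D v α c₁ x - Lop d D v α c₂ x := by
  have hflux : ∀ i, (fun y => ∑ j, D y i j * pd d (c₁ - c₂) j y) =ᶠ[𝓝 x]
      (fun y => ∑ j, D y i j * pd d c₁ j y) - (fun y => ∑ j, D y i j * pd d c₂ j y) := by
    intro i
    filter_upwards [hc₁.eventually (by simp), hc₂.eventually (by simp)] with y h₁ h₂
    simp [pd_sub (h₁.differentiableAt two_ne_zero) (h₂.differentiableAt two_ne_zero), mul_sub]
  have hdiv : ∀ i, pd d (fun y => ∑ j, D y i j * pd d (c₁ - c₂) j y) i x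
      = pd d (fun y => ∑ j, D y i j * pd d c₁ j y) i x
        - pd d (fun y => ∑ j, D y i j * pd d c₂ j y) i x := fun i => by
    rw [pd, (hflux i).fderiv_eq, ← pd,
      pd_sub (differentiableAt_sum_mul_pd hD hc₁ i) (differentiableAt_sum_mul_pd hD hc₂ i)]
  simp only [Lop, hdiv, Pi.sub_apply, Finset.sum_sub_distrib, mul_sub,
    pd_sub (hc₁.differentiableAt two_ne_zero) (hc₂.differentiableAt two_ne_zero)]
  ring

theorem Lop_nonneg_of_isLocalMax {u : EuclideanSpace ℝ (Fin d) → ℝ} (hmax : IsLocalMax u x)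
    (hu : ContDiffAt ℝ 2 u x) (hD : ∀ i j, DifferentiableAt ℝ (fun y => D y i j) x)
    (hDx : (D x).PosSemidef) (hα : 0 ≤ α x) (hux : 0 ≤ u x) : 0 ≤ Lop d D v α u x := by
  have hu' : DifferentiableAt ℝ (fderiv ℝ u) x :=
    (hu.fderiv_right (m := 1) le_rfl).differentiableAt one_ne_zero
  have hcrit : ∀ j, pd d u j x = 0 := fun j => by simp [pd, hmax.fderiv_eq_zero]
  have hHess : ∑ i, ∑ j, D x i j * pd d (pd d u j) i x ≤ 0 := hDx.sum_mul_nonpos fun ξ => by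
    simpa only [pd_pd_eq_fderiv_fderiv hu', sum_sum_mul_apply_single] using
      hmax.fderiv_fderiv_apply_self_nonpos
        ((hu.eventually (by simp)).mono fun _ h => h.differentiableAt two_ne_zero) hu'
        (WithLp.toLp 2 ξ)
  simp only [Lop, pd_sum_mul_pd_of_pd_eq_zero hD hu.differentiableAt_pd hcrit, hcrit, mul_zero,
    Finset.sum_const_zero]
  nlinarith [mul_nonneg hα hux]

end Euclidean

theorem continuous_strong_comparison_principle_general
    (d : ℕ)
    (Ω : Set (EuclideanSpace ℝ (Fin d)))
    (hΩopen : IsOpen Ω) (hΩbd : Bornology.IsBounded Ω)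
    (D : EuclideanSpace ℝ (Fin d) → Matrix (Fin d) (Fin d) ℝ)
    (hD : ∀ i j, ContDiff ℝ 1 (fun x => D x i j))
    (hDsymm : ∀ x, (D x).IsSymm)
    (lam0 Lam : ℝ) (hlam0 : 0 < lam0)
    (hellip : ∀ x ∈ Ω, ∀ ξ : Fin d → ℝ,
      lam0 * (∑ i, ξ i ^ 2) ≤ (∑ i, ∑ j, ξ i * D x i j * ξ j) ∧
      (∑ i, ∑ j, ξ i * D x i j * ξ j) ≤ Lam * (∑ i, ξ i ^ 2))
    (v : EuclideanSpace ℝ (Fin d) → EuclideanSpace ℝ (Fin d))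
    (α : EuclideanSpace ℝ (Fin d) → ℝ)
    (hαnn : ∀ x ∈ Ω, 0 ≤ α x)
    (c₁ c₂ : EuclideanSpace ℝ (Fin d) → ℝ)
    (hc₁ : ContDiffOn ℝ 2 c₁ Ω) (hc₁cont : ContinuousOn c₁ (closure Ω))
    (hc₂ : ContDiffOn ℝ 2 c₂ Ω) (hc₂cont : ContinuousOn c₂ (closure Ω))
    (hL : ∀ x ∈ Ω, Lop d D v α c₁ x < Lop d D v α c₂ x)
    (hbd : ∀ x ∈ closure Ω \ Ω, c₁ x ≤ c₂ x) :
    ∀ x ∈ Ω, c₁ x < c₂ x := by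
  intro x hx
  by_contra! hx₂₁
  obtain ⟨x₀, hx₀, hmax, hu₀⟩ := exists_isMaxOn_nonneg_of_nonpos_on_boundary
    hΩbd.isCompact_closure (hc₁cont.sub hc₂cont) (fun y hy => sub_nonpos.2 (hbd y hy)) hx
    (sub_nonneg.2 hx₂₁)
  have hx₀nhds : Ω ∈ 𝓝 x₀ := hΩopen.mem_nhds hx₀
  have hC₁ := hc₁.contDiffAt hx₀nhds
  have hC₂ := hc₂.contDiffAt hx₀nhds
  have hDdiff : ∀ i j, DifferentiableAt ℝ (fun y => D y i j) x₀ :=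
    fun i j => (hD i j).differentiable one_ne_zero x₀
  have hDpsd : (D x₀).PosSemidef :=
    Matrix.posSemidef_of_isSymm_of_sum_mul_nonneg (hDsymm x₀) fun ξ =>
      (mul_nonneg hlam0.le (Finset.sum_nonneg fun i _ => sq_nonneg (ξ i))).trans
        (hellip x₀ hx₀ ξ).1
  have hLu := Lop_nonneg_of_isLocalMax (v := v) (hmax.isLocalMax hx₀nhds) (hC₁.sub hC₂) hDdiff
    hDpsd (hαnn x₀ hx₀) hu₀
  rw [Lop_sub hDdiff hC₁ hC₂] at hLu
  linarith [hL x₀ hx₀]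

/-- Continuous strong comparison principle. -/
theorem continuous_strong_comparison_principle
    (d : ℕ) (hd : 1 ≤ d)
    (Ω : Set (EuclideanSpace ℝ (Fin d)))
    (hΩne : Ω.Nonempty) (hΩopen : IsOpen Ω) (hΩbd : Bornology.IsBounded Ω)
    (hΩconn : IsConnected Ω)
    (D : EuclideanSpace ℝ (Fin d) → Matrix (Fin d) (Fin d) ℝ)
    (hD : ∀ i j, ContDiff ℝ 1 (fun x => D x i j))
    (hDsymm : ∀ x, (D x).IsSymm)
    (lam0 Lam : ℝ) (hlam0 : 0 < lam0) (hlamLam : lam0 ≤ Lam)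
    (hellip : ∀ x ∈ Ω, ∀ ξ : Fin d → ℝ,
      lam0 * (∑ i, ξ i ^ 2) ≤ (∑ i, ∑ j, ξ i * D x i j * ξ j) ∧
      (∑ i, ∑ j, ξ i * D x i j * ξ j) ≤ Lam * (∑ i, ξ i ^ 2))
    (v : EuclideanSpace ℝ (Fin d) → EuclideanSpace ℝ (Fin d))
    (hv : ContinuousOn v Ω) (hvbd : ∃ M, ∀ x ∈ Ω, ‖v x‖ ≤ M)
    (α : EuclideanSpace ℝ (Fin d) → ℝ)
    (hα : Continuous α) (hαnn : ∀ x ∈ Ω, 0 ≤ α x)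
    (c₁ c₂ : EuclideanSpace ℝ (Fin d) → ℝ)
    (hc₁ : ContDiffOn ℝ 2 c₁ Ω) (hc₁cont : ContinuousOn c₁ (closure Ω))
    (hc₂ : ContDiffOn ℝ 2 c₂ Ω) (hc₂cont : ContinuousOn c₂ (closure Ω))
    (hL : ∀ x ∈ Ω, Lop d D v α c₁ x < Lop d D v α c₂ x)
    (hbd : ∀ x ∈ closure Ω \ Ω, c₁ x ≤ c₂ x) :
    ∀ x ∈ Ω, c₁ x < c₂ x :=
  continuous_strong_comparison_principle_general d Ω hΩopen hΩbd D hD hDsymm lam0 Lam hlam0 hellip v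
    α hαnn c₁ c₂ hc₁ hc₁cont hc₂ hc₂cont hL hbd
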